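/- Let g be the Dirichlet inverse of ω + 1, G(x) = ∑_{n ≤ x} g(n), M(x) = ∑_{n ≤ x} μ(n), and π(x) the prime counting function. Then for every real x ≥ 1, M(x) = G(x) + ∑_{k ≤ x} g(k) π(⌊x/k⌋). -/

import Mathlib

open ArithmeticFunction Nat Finset

/-!
As arithmetic functions (which vanish at `0`), `ω + 1` is `ω + ζ`, and `ω + ζ = ζ * (P + 1)`
where `P` is the indicator of the primes, since `ω n` counts the prime divisors of `n`. So if `g`
inverts `ω + ζ`, then `μ = ζ⁻¹ = g * (P + 1)`. Summing this convolution up to `N` gives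
`∑_{k ≤ N} g k * ∑_{m ≤ N / k} (P + 1) m`, and the inner sum is `π (N / k) + 1`.
-/

open scoped ArithmeticFunction.omega ArithmeticFunction.zeta ArithmeticFunction.Moebius

namespace ArithmeticFunction

variable {R : Type*}

def primeIndicator [Zero R] [One R] : ArithmeticFunction R :=
  ⟨fun n => if n.Prime then 1 else 0, by simp [Nat.not_prime_zero]⟩

@[simp]
theorem primeIndicator_apply [Zero R] [One R] (n : ℕ) :
    (primeIndicator : ArithmeticFunction R) n = if n.Prime then 1 else 0 := rfl

theorem coe_zeta_mul_primeIndicator [Semiring R] :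
    (ζ : ArithmeticFunction R) * primeIndicator = (ω : ArithmeticFunction R) := by
  ext n
  rw [coe_zeta_mul_apply, natCoe_apply, cardDistinctFactors_apply, ← List.card_toFinset,
    ← Nat.primeFactors]
  simp only [primeIndicator_apply, sum_ite, sum_const_zero, add_zero, sum_const, nsmul_one]
  congr 2
  ext p
  simp [Nat.mem_primeFactors, and_comm]

theorem sum_Ioc_primeIndicator [AddCommMonoidWithOne R] (N : ℕ) :
    ∑ n ∈ Ioc 0 N, (primeIndicator : ArithmeticFunction R) n = primeCounting N := by
  simp only [primeIndicator_apply, sum_ite, sum_const_zero, add_zero, sum_const, nsmul_one,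
    ← primesLE_card_eq_primeCounting]
  congr 2
  ext p
  simp only [mem_filter, mem_Ioc, primesLE, primesBelow, mem_range]
  exact ⟨fun ⟨⟨_, hpN⟩, hp⟩ => ⟨by omega, hp⟩,
    fun ⟨hpN, hp⟩ => ⟨⟨hp.pos, by omega⟩, hp⟩⟩


def ofFun [Zero R] (f : ℕ → R) : ArithmeticFunction R :=
  ⟨fun n => if n = 0 then 0 else f n, if_pos rfl⟩

theorem ofFun_apply_of_ne_zero [Zero R] (f : ℕ → R) {n : ℕ} (hn : n ≠ 0) :
    ofFun f n = f n :=
  if_neg hn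

theorem coe_omega_add_coe_zeta_mul_ofFun_eq_one [Semiring R] {g : ℕ → R} (hg1 : g 1 = 1)
    (hg : ∀ n : ℕ, 2 ≤ n → ∑ d ∈ n.divisors, ((ω d : R) + 1) * g (n / d) = 0) :
    (ω + ζ : ArithmeticFunction R) * ofFun g = 1 := by
  ext n
  rw [mul_apply, one_apply,
    Nat.sum_divisorsAntidiagonal fun a b => (ω + ζ : ArithmeticFunction R) a * ofFun g b]
  rcases lt_or_ge n 2 with hn | hn
  · interval_cases n <;> simp [ofFun_apply_of_ne_zero, hg1]
  rw [if_neg (by omega), ← hg n hn]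
  refine sum_congr rfl fun d hd => ?_
  have hd0 : d ≠ 0 := (Nat.pos_of_mem_divisors hd).ne'
  have hnd0 : n / d ≠ 0 := (Nat.div_pos (divisor_le hd) (Nat.pos_of_ne_zero hd0)).ne'
  rw [add_apply, natCoe_apply, natCoe_apply, zeta_apply, if_neg hd0,
    ofFun_apply_of_ne_zero g hnd0]
  push_cast
  rfl

theorem coe_moebius_eq_mul_primeIndicator_add_one [CommRing R] {f : ArithmeticFunction R}
    (hf : (ω + ζ : ArithmeticFunction R) * f = 1) :
    (μ : ArithmeticFunction R) = f * (primeIndicator + 1) := by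
  have hζ :
      (ω + ζ : ArithmeticFunction R) = ζ * (primeIndicator + 1 : ArithmeticFunction R) := by
    rw [mul_add, mul_one, coe_zeta_mul_primeIndicator]
  calc (μ : ArithmeticFunction R) = μ * ((ω + ζ : ArithmeticFunction R) * f) := by
        rw [hf, mul_one]
    _ = (μ * ζ : ArithmeticFunction R) * f * (primeIndicator + 1) := by rw [hζ]; ring
    _ = f * (primeIndicator + 1) := by rw [coe_moebius_mul_coe_zeta, one_mul]

theorem sum_Ioc_moebius_eq_sum_add_sum_mul_primeCounting [CommRing R] {g : ℕ → R}
    (hg1 : g 1 = 1)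
    (hg : ∀ n : ℕ, 2 ≤ n → ∑ d ∈ n.divisors, ((ω d : R) + 1) * g (n / d) = 0)
    (N : ℕ) :
    ∑ n ∈ Ioc 0 N, (μ : ArithmeticFunction R) n =
      ∑ n ∈ Ioc 0 N, g n + ∑ n ∈ Ioc 0 N, g n * primeCounting (N / n) := by
  have hg' : ∀ n ∈ Ioc 0 N, ofFun g n = g n := fun n hn =>
    ofFun_apply_of_ne_zero g (mem_Ioc.1 hn).1.ne'
  rw [coe_moebius_eq_mul_primeIndicator_add_one
    (coe_omega_add_coe_zeta_mul_ofFun_eq_one hg1 hg), mul_add, mul_one]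
  simp only [add_apply, sum_add_distrib, sum_Ioc_mul_eq_sum_sum, sum_Ioc_primeIndicator]
  rw [add_comm]
  congr 1 <;> exact sum_congr rfl fun n hn => by rw [hg' n hn]

end ArithmeticFunction

theorem mertens_eq_G_add_sum_g_primeCounting
    (g : ℕ → ℤ)
    (hg1 : g 1 = 1)
    (hg : ∀ n : ℕ, 2 ≤ n → ∑ d ∈ n.divisors, ((cardDistinctFactors d : ℤ) + 1) * g (n / d) = 0) :
    ∀ x : ℝ, 1 ≤ x →
      ∑ n ∈ Icc 1 ⌊x⌋₊, moebius n =
        (∑ n ∈ Icc 1 ⌊x⌋₊, g n) +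
          ∑ k ∈ Icc 1 ⌊x⌋₊, g k * (Nat.primeCounting ⌊x / (k : ℝ)⌋₊ : ℤ) := by
  intro x _
  simpa [Nat.floor_div_natCast, ← Finset.Icc_add_one_left_eq_Ioc] using
    sum_Ioc_moebius_eq_sum_add_sum_mul_primeCounting hg1 hg ⌊x⌋₊
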